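/- arXiv:0807.4276 — 4 statements merged into one kernel-verified Lean document; each statement's English description precedes it below -/
import Mathlib

section
/- If A and B are normal elements of a unital C*-algebra, then the Hausdorff distance between their spectra is at most ||A - B||. -/
/-!
Let `z ∈ σ(a)` and suppose `‖a - b‖ < r := dist(z, σ(b))`. Then `z ∉ σ(b)`, and since
`z - b` is normal, continuous functional calculus bounds the norm of its inverse by the
supremum of `|z - μ|⁻¹` over `μ ∈ σ(b)`, i.e. by `r⁻¹`. Hence `z - a = (z - b) - (a - b)` is a
perturbation of the invertible `z - b` by less than `‖(z - b)⁻¹‖⁻¹`, so it is invertible,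
contradicting `z ∈ σ(a)`. By symmetry both one-sided Hausdorff distances are at most `‖a - b‖`.
-/

open Metric

lemma isStarNormal_algebraMap_sub {R A : Type*} [CommSemiring R] [StarRing R] [Ring A]
    [StarRing A] [Algebra R A] [StarModule R A] (r : R) (b : A) [IsStarNormal b] :
    IsStarNormal (algebraMap R A r - b) :=
  have : IsStarNormal (algebraMap R A r) := ⟨(Algebra.commute_algebraMap_left r _).symm⟩
  (Algebra.commute_algebraMap_left r (star b)).isStarNormal_sub

section CStarAlgebra

variable {A : Type*} [CStarAlgebra A]

lemma IsStarNormal.norm_inv_le (u : Aˣ) [IsStarNormal (u : A)] {r : ℝ} (hr : 0 < r)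
    (h : ∀ x ∈ spectrum ℂ (u : A), r ≤ ‖x‖) : ‖(↑u⁻¹ : A)‖ ≤ r⁻¹ := by
  rw [← cfc_inv_id (R := ℂ) u]
  refine norm_cfc_le (inv_nonneg.mpr hr.le) fun x hx ↦ ?_
  rw [norm_inv]
  exact inv_anti₀ hr (h x hx)

lemma notMem_spectrum_of_norm_sub_lt_infDist (a b : A) [IsStarNormal b] {z : ℂ}
    (h : ‖a - b‖ < infDist z (spectrum ℂ b)) : z ∉ spectrum ℂ a := by
  nontriviality A
  set r := infDist z (spectrum ℂ b)
  have hr : 0 < r := (norm_nonneg _).trans_lt h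
  have hzb : z ∉ spectrum ℂ b := fun hz ↦ hr.ne' (infDist_zero_of_mem hz)
  obtain ⟨u, hu⟩ := spectrum.notMem_iff.mp hzb
  have : IsStarNormal (u : A) := hu ▸ isStarNormal_algebraMap_sub z b
  have hspec : ∀ x ∈ spectrum ℂ (u : A), r ≤ ‖x‖ := by
    rw [hu, ← spectrum.singleton_sub_eq, Set.singleton_sub]
    rintro _ ⟨μ, hμ, rfl⟩
    simpa [dist_eq_norm] using infDist_le_dist_of_mem hμ
  have hnear : ‖(algebraMap ℂ A z - a) - u‖ < ‖(↑u⁻¹ : A)‖⁻¹ := calc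
    ‖(algebraMap ℂ A z - a) - u‖ = ‖a - b‖ := by rw [hu, ← norm_neg]; congr 1; abel
    _ < r := h
    _ ≤ ‖(↑u⁻¹ : A)‖⁻¹ :=
      (le_inv_comm₀ (Units.norm_pos u⁻¹) hr).mp (IsStarNormal.norm_inv_le u hr hspec)
  exact spectrum.notMem_iff.mpr ⟨u.ofNearby _ hnear, rfl⟩

lemma infDist_le_norm_sub_of_mem_spectrum (a b : A) [IsStarNormal b] {z : ℂ}
    (hz : z ∈ spectrum ℂ a) : infDist z (spectrum ℂ b) ≤ ‖a - b‖ :=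
  not_lt.mp fun h ↦ notMem_spectrum_of_norm_sub_lt_infDist a b h hz

end CStarAlgebra

/-- If `a` and `b` are normal elements of a unital C*-algebra, then the Hausdorff distance
between their spectra is at most `‖a - b‖`. -/
theorem stmt_1 {𝒜 : Type*} [NormedRing 𝒜] [StarRing 𝒜] [CStarRing 𝒜] [CompleteSpace 𝒜]
    [NormedAlgebra ℂ 𝒜] [StarModule ℂ 𝒜] [NormOneClass 𝒜]
    (a b : 𝒜) (ha : IsStarNormal a) (hb : IsStarNormal b) :
    Metric.hausdorffDist (spectrum ℂ a) (spectrum ℂ b) ≤ ‖a - b‖ := by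
  let _ : CStarAlgebra 𝒜 := {}
  refine hausdorffDist_le_of_infDist (norm_nonneg _)
    (fun z hz ↦ infDist_le_norm_sub_of_mem_spectrum a b hz) (fun z hz ↦ ?_)
  rw [norm_sub_rev]
  exact infDist_le_norm_sub_of_mem_spectrum b a hz
end

section
/- If α is irrational, then the spectrum of the almost Mathieu operator H(α,λ,θ) is independent of θ ∈ [0,1). -/
/-!
Shifting the phase by `α` conjugates `H(θ)` by the unitary shift of `ℓ²(ℤ)`, and shifting it by `1`
changes nothing, so every phase shift in the dense group `ℤα + ℤ` acts on the family by unitary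
conjugation. Such a conjugation preserves the spectrum and the norm of every resolvent. As
`θ ↦ H(θ)` is norm-continuous, `H(θ₁)` is a norm limit of unitary conjugates of `H(θ₂)`, and the
uniform resolvent bound turns every point of the resolvent set of `H(θ₂)` into one of `H(θ₁)`.
-/

open Real

/-- The standard orthonormal basis vector `e n` of `ℓ²(ℤ)`. -/
noncomputable def lpBasis (n : ℤ) : lp (fun _ : ℤ => ℂ) 2 := lp.single 2 n 1

open scoped lp ENNReal

section ConjPeriods

variable {G A : Type*} [AddGroup G] [Monoid A] [StarMul A]

def conjPeriods (f : G → A) : AddSubgroup G where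
  carrier := {g | ∀ x, ∃ u : unitary A, f (x + g) = u * f x * star (u : A)}
  zero_mem' x := ⟨1, by simp⟩
  add_mem' {a b} ha hb x := by
    obtain ⟨u, hu⟩ := ha x
    obtain ⟨v, hv⟩ := hb (x + a)
    exact ⟨v * u, by simp [← add_assoc, hv, hu, mul_assoc]⟩
  neg_mem' {a} ha x := by
    obtain ⟨u, hu⟩ := ha (x + -a)
    refine ⟨star u, ?_⟩
    simp only [add_assoc, neg_add_cancel, add_zero] at hu
    rw [hu, Unitary.coe_star, star_star, ← mul_assoc, ← mul_assoc, Unitary.coe_star_mul_self,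
      one_mul, mul_assoc, Unitary.coe_star_mul_self, mul_one]

end ConjPeriods

section Spectrum

variable {𝕜 A : Type*} [NormedField 𝕜] [NormedRing A] [StarRing A] [CStarRing A]
  [CompleteSpace A] [NormedAlgebra 𝕜 A]

theorem spectrum_subset_of_mem_closure_unitary_conj {a b : A}
    (h : a ∈ closure (Set.range fun u : unitary A => (u : A) * b * star (u : A))) :
    spectrum 𝕜 a ⊆ spectrum 𝕜 b := by
  intro z
  contrapose
  simp only [spectrum.notMem_iff]
  rintro ⟨r, hr⟩
  nontriviality A
  obtain ⟨_, ⟨u, rfl⟩, hx⟩ :=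
    Metric.mem_closure_iff.1 h ‖(↑r⁻¹ : A)‖⁻¹ (inv_pos.2 (Units.norm_pos r⁻¹))
  let v : Aˣ := Unitary.toUnits u * r * (Unitary.toUnits u)⁻¹
  have hv : (v : A) = algebraMap 𝕜 A z - u * b * star (u : A) := by
    have hv' : (v : A) = u * (algebraMap 𝕜 A z - b) * star (u : A) := by
      simp [v, hr, ← Unitary.star_eq_inv]
    rw [hv', mul_sub, sub_mul, ← Algebra.commutes, mul_assoc, Unitary.mul_star_self_of_mem u.2,
      mul_one]
  have hv_inv : ‖(↑v⁻¹ : A)‖ = ‖(↑r⁻¹ : A)‖ := by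
    simp [v, mul_assoc]
  refine (v.ofNearby _ ?_).isUnit
  rwa [hv_inv, hv, sub_sub_sub_cancel_left, ← dist_eq_norm']

variable {G : Type*} [AddGroup G] [TopologicalSpace G] [IsTopologicalAddGroup G]

theorem spectrum_subset_of_dense_conjPeriods {f : G → A} (hf : Continuous f)
    (hP : Dense (conjPeriods f : Set G)) (x y : G) : spectrum 𝕜 (f x) ⊆ spectrum 𝕜 (f y) := by
  refine spectrum_subset_of_mem_closure_unitary_conj <|
    closure_mono ?_ (mem_closure_image hf.continuousAt (hP.vadd y x))
  rintro _ ⟨_, ⟨g, hg, rfl⟩, rfl⟩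
  obtain ⟨u, hu⟩ := hg y
  exact ⟨u, hu.symm⟩

theorem spectrum_eq_of_dense_conjPeriods {f : G → A} (hf : Continuous f)
    (hP : Dense (conjPeriods f : Set G)) (x y : G) : spectrum 𝕜 (f x) = spectrum 𝕜 (f y) :=
  (spectrum_subset_of_dense_conjPeriods hf hP x y).antisymm
    (spectrum_subset_of_dense_conjPeriods hf hP y x)

end Spectrum

section Reindex

variable {α β : Type*} {𝕜 E : Type*} [NormedAddCommGroup E] {p : ℝ≥0∞}

theorem Memℓp.comp_equiv {f : β → E} (hf : Memℓp f p) (e : α ≃ β) : Memℓp (f ∘ e) p := by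
  rcases p.trichotomy with rfl | rfl | hp
  · rw [memℓp_zero_iff] at hf ⊢
    exact hf.preimage e.injective.injOn
  · rw [memℓp_infty_iff] at hf ⊢
    rwa [← e.surjective.range_comp (fun b => ‖f b‖)] at hf
  · rw [memℓp_gen_iff hp] at hf ⊢
    exact e.summable_iff.2 hf

theorem lp.norm_comp_equiv [Fact (1 ≤ p)] {f : lp (fun _ : β => E) p}
    {g : lp (fun _ : α => E) p} (e : α ≃ β) (hfg : ⇑g = f ∘ e) : ‖g‖ = ‖f‖ := by
  rcases p.trichotomy with rfl | rfl | hp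
  · exact absurd (Fact.out : (1 : ℝ≥0∞) ≤ 0) (by norm_num)
  · rw [lp.norm_eq_ciSup, lp.norm_eq_ciSup, hfg]
    exact e.iSup_comp (g := fun b => ‖f b‖)
  · rw [lp.norm_eq_tsum_rpow hp, lp.norm_eq_tsum_rpow hp, hfg, Function.comp_def,
      e.tsum_eq (fun b => ‖f b‖ ^ p.toReal)]

variable (𝕜) [NormedRing 𝕜] [Module 𝕜 E] [IsBoundedSMul 𝕜 E] [Fact (1 ≤ p)]

noncomputable def lp.reindex (e : α ≃ β) : lp (fun _ : β => E) p ≃ₗᵢ[𝕜] lp (fun _ : α => E) p where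
  toFun f := ⟨f ∘ e, (lp.memℓp f).comp_equiv e⟩
  invFun f := ⟨f ∘ e.symm, (lp.memℓp f).comp_equiv e.symm⟩
  left_inv f := lp.ext <| funext fun b => congrArg f (e.apply_symm_apply b)
  right_inv f := lp.ext <| funext fun a => congrArg f (e.symm_apply_apply a)
  map_add' _ _ := rfl
  map_smul' _ _ := rfl
  norm_map' _ := lp.norm_comp_equiv e rfl

@[simp]
theorem lp.reindex_symm_apply (e : α ≃ β) (f : lp (fun _ : α => E) p) (b : β) :
    (lp.reindex 𝕜 e).symm f b = f (e.symm b) := rfl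

end Reindex

section MultiplicationOperator

variable (ι 𝕜 : Type*) [RCLike 𝕜] (p : ℝ≥0∞) [Fact (1 ≤ p)]

noncomputable def lp.multiplicationOperator :
    lp (fun _ : ι => 𝕜) ∞ →L[𝕜] lp (fun _ : ι => 𝕜) p →L[𝕜] lp (fun _ : ι => 𝕜) p :=
  lp.holderL (K := 1) p (fun _ => ContinuousLinearMap.mul 𝕜 𝕜) fun _ =>
    ContinuousLinearMap.opNorm_mul_le 𝕜 𝕜

variable {ι 𝕜 p}

@[simp]
theorem lp.multiplicationOperator_apply (v : lp (fun _ : ι => 𝕜) ∞) (f : lp (fun _ : ι => 𝕜) p)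
    (i : ι) : lp.multiplicationOperator ι 𝕜 p v f i = v i * f i := rfl

end MultiplicationOperator

theorem ext_lpBasis {A B : ℓ²(ℤ, ℂ) →L[ℂ] ℓ²(ℤ, ℂ)} (h : ∀ n, A (lpBasis n) = B (lpBasis n)) :
    A = B :=
  lp.ext_continuousLinearMap ENNReal.ofNat_ne_top fun n => ContinuousLinearMap.ext_ring (h n)

namespace AlmostMathieu

noncomputable def potential (α l θ : ℝ) : ℓ^∞(ℤ, ℂ) :=
  ⟨fun n => ((2 * l * Real.cos (2 * π * (n * α + θ)) : ℝ) : ℂ), memℓp_infty ⟨2 * |l|, by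
    rintro _ ⟨n, rfl⟩
    dsimp only
    rw [Complex.norm_real, Real.norm_eq_abs, abs_mul, abs_mul, abs_two]
    exact mul_le_of_le_one_right (by positivity) (Real.abs_cos_le_one _)⟩⟩

theorem potential_apply (α l θ : ℝ) (n : ℤ) :
    potential α l θ n = ((2 * l * Real.cos (2 * π * (n * α + θ)) : ℝ) : ℂ) := rfl

theorem potential_add_one (α l θ : ℝ) : potential α l (θ + 1) = potential α l θ := by
  ext n
  simp only [potential_apply, ← add_assoc, mul_add_one (2 * π), Real.cos_add_two_pi]

theorem potential_add_apply (α l θ : ℝ) (n : ℤ) :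
    potential α l (θ + α) n = potential α l θ (n + 1) := by
  simp only [potential_apply]
  push_cast
  ring_nf

theorem lipschitzWith_potential (α l : ℝ) : LipschitzWith ‖4 * π * l‖₊ (potential α l) := by
  refine LipschitzWith.of_dist_le_mul fun a b => ?_
  rw [dist_eq_norm]
  refine lp.norm_le_of_forall_le (by positivity) fun n => ?_
  have hcos := Real.abs_cos_sub_cos_le (2 * π * (n * α + a)) (2 * π * (n * α + b))
  rw [show 2 * π * (n * α + a) - 2 * π * (n * α + b) = 2 * π * (a - b) by ring, abs_mul,
    abs_of_pos two_pi_pos] at hcos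
  calc ‖(potential α l a - potential α l b) n‖
      = 2 * |l| * |Real.cos (2 * π * (n * α + a)) - Real.cos (2 * π * (n * α + b))| := by
        rw [lp.coeFn_sub, Pi.sub_apply, potential_apply, potential_apply, ← Complex.ofReal_sub,
          Complex.norm_real, Real.norm_eq_abs, ← mul_sub, abs_mul, abs_mul, abs_two]
    _ ≤ 2 * |l| * (2 * π * |a - b|) := by gcongr
    _ = ‖4 * π * l‖₊ * dist a b := by
        rw [coe_nnnorm, Real.norm_eq_abs, Real.dist_eq, abs_mul (4 * π),
          abs_of_pos (by positivity : (0 : ℝ) < 4 * π)]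
        ring

noncomputable def shift : unitary (ℓ²(ℤ, ℂ) →L[ℂ] ℓ²(ℤ, ℂ)) :=
  Unitary.linearIsometryEquiv.symm (lp.reindex ℂ (Equiv.subRight 1))

theorem shift_apply (f : ℓ²(ℤ, ℂ)) (n : ℤ) : (shift : ℓ²(ℤ, ℂ) →L[ℂ] ℓ²(ℤ, ℂ)) f n = f (n - 1) :=
  rfl

theorem star_shift_apply (f : ℓ²(ℤ, ℂ)) (n : ℤ) :
    (star shift : ℓ²(ℤ, ℂ) →L[ℂ] ℓ²(ℤ, ℂ)) f n = f (n + 1) := by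
  change (Unitary.linearIsometryEquiv shift).symm f n = _
  simp [shift]

noncomputable def operator (α l θ : ℝ) : ℓ²(ℤ, ℂ) →L[ℂ] ℓ²(ℤ, ℂ) :=
  shift + star shift + lp.multiplicationOperator ℤ ℂ 2 (potential α l θ)

theorem operator_apply (α l θ : ℝ) (f : ℓ²(ℤ, ℂ)) (n : ℤ) :
    operator α l θ f n = f (n - 1) + f (n + 1) + potential α l θ n * f n := by
  simp [operator, shift_apply, star_shift_apply]

theorem operator_lpBasis (α l θ : ℝ) (n : ℤ) :
    operator α l θ (lpBasis n) = lpBasis (n + 1) + lpBasis (n - 1) +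
      ((2 * l * Real.cos (2 * π * (n * α + θ)) : ℝ) : ℂ) • lpBasis n := by
  ext m
  simp only [operator_apply, lpBasis, lp.coeFn_add, lp.coeFn_smul, Pi.add_apply, Pi.smul_apply,
    lp.single_apply, Pi.single_apply, smul_eq_mul, sub_eq_iff_eq_add, ← eq_sub_iff_add_eq]
  rcases eq_or_ne m n with rfl | hmn
  · simp [potential_apply]
  · simp [hmn]

theorem continuous_operator (α l : ℝ) : Continuous (operator α l) :=
  continuous_const.add <|
    (lp.multiplicationOperator ℤ ℂ 2).continuous.comp (lipschitzWith_potential α l).continuous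

theorem operator_add_one (α l θ : ℝ) : operator α l (θ + 1) = operator α l θ := by
  rw [operator, operator, potential_add_one]

theorem operator_add (α l θ : ℝ) :
    operator α l (θ + α) = star shift * operator α l θ * shift := by
  ext f n
  simp [operator_apply, shift_apply, star_shift_apply, potential_add_apply]

theorem dense_conjPeriods_operator {α : ℝ} (l : ℝ) (hα : Irrational α) :
    Dense (conjPeriods (operator α l) : Set ℝ) := by
  refine (dense_addSubgroupClosure_pair_iff.2 (by rwa [div_one])).mono ?_
  rw [SetLike.coe_subset_coe, AddSubgroup.closure_le, Set.pair_subset_iff]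
  exact ⟨fun θ => ⟨star shift, by rw [operator_add, ← Unitary.coe_star, star_star]⟩,
    fun θ => ⟨1, by simp [operator_add_one]⟩⟩

end AlmostMathieu

open AlmostMathieu in
theorem stmt_9_general (α l θ₁ θ₂ : ℝ) (hα : Irrational α)
    (H₁ H₂ : lp (fun _ : ℤ => ℂ) 2 →L[ℂ] lp (fun _ : ℤ => ℂ) 2)
    (h₁ : ∀ n : ℤ, H₁ (lpBasis n) = lpBasis (n + 1) + lpBasis (n - 1) +
      ((2 * l * Real.cos (2 * π * (n * α + θ₁)) : ℝ) : ℂ) • lpBasis n)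
    (h₂ : ∀ n : ℤ, H₂ (lpBasis n) = lpBasis (n + 1) + lpBasis (n - 1) +
      ((2 * l * Real.cos (2 * π * (n * α + θ₂)) : ℝ) : ℂ) • lpBasis n) :
    spectrum ℂ H₁ = spectrum ℂ H₂ := by
  obtain rfl : H₁ = operator α l θ₁ := ext_lpBasis fun n => (h₁ n).trans (operator_lpBasis ..).symm
  obtain rfl : H₂ = operator α l θ₂ := ext_lpBasis fun n => (h₂ n).trans (operator_lpBasis ..).symm
  exact spectrum_eq_of_dense_conjPeriods (continuous_operator α l) (dense_conjPeriods_operator l hα)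
    θ₁ θ₂

/-- If `α` is irrational, then the spectrum of the almost Mathieu operator `H(α,λ,θ)`
is independent of `θ`. -/
theorem stmt_9 (α l θ₁ θ₂ : ℝ) (hα : Irrational α)
    (hθ₁ : θ₁ ∈ Set.Ico (0 : ℝ) 1) (hθ₂ : θ₂ ∈ Set.Ico (0 : ℝ) 1)
    (H₁ H₂ : lp (fun _ : ℤ => ℂ) 2 →L[ℂ] lp (fun _ : ℤ => ℂ) 2)
    (hH₁sa : IsSelfAdjoint H₁) (hH₂sa : IsSelfAdjoint H₂)
    (h₁ : ∀ n : ℤ, H₁ (lpBasis n) = lpBasis (n + 1) + lpBasis (n - 1) +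
      ((2 * l * Real.cos (2 * π * (n * α + θ₁)) : ℝ) : ℂ) • lpBasis n)
    (h₂ : ∀ n : ℤ, H₂ (lpBasis n) = lpBasis (n + 1) + lpBasis (n - 1) +
      ((2 * l * Real.cos (2 * π * (n * α + θ₂)) : ℝ) : ℂ) • lpBasis n) :
    spectrum ℂ H₁ = spectrum ℂ H₂ :=
  stmt_9_general α l θ₁ θ₂ hα H₁ H₂ h₁ h₂
end

section
/- Let X be a compact topological space, 𝒜, ℬ unital C*-algebras, and ρ : X → Hom(𝒜,ℬ) a continuous family of unital *-homomorphisms that separates points of 𝒜 (for every nonzero A ∈ 𝒜 there exists x with ρ(x)(A) ≠ 0). Then for every normal A ∈ 𝒜, σ(A) = ⋃_{x∈X} σ(ρ(x)(A)), and in particular this union is closed. -/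
/-- Let `X` be a compact space, `𝒜`, `ℬ` unital C*-algebras and `ρ : X → Hom(𝒜,ℬ)` a
pointwise-norm-continuous family of unital *-homomorphisms that separates the points of `𝒜`.
Then for every normal `A ∈ 𝒜`, `σ(A) = ⋃_{x ∈ X} σ(ρ(x)(A))`; in particular this union is
closed. -/
theorem stmt_12 {X : Type*} [TopologicalSpace X] [CompactSpace X]
    {𝒜 ℬ : Type*} [CStarAlgebra 𝒜] [CStarAlgebra ℬ]
    (ρ : X → (𝒜 →⋆ₐ[ℂ] ℬ))
    (hcont : ∀ a : 𝒜, Continuous fun x => ρ x a)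
    (hsep : ∀ a : 𝒜, a ≠ 0 → ∃ x, ρ x a ≠ 0)
    (a : 𝒜) (ha : IsStarNormal a) :
    (spectrum ℂ a = ⋃ x : X, spectrum ℂ (ρ x a)) ∧
    IsClosed (⋃ x : X, spectrum ℂ (ρ x a)) := by
  have key : spectrum ℂ a = ⋃ x : X, spectrum ℂ (ρ x a) := by
    refine le_antisymm ?_ (Set.iUnion_subset fun x => AlgHom.spectrum_apply_subset (ρ x) a)
    rcases subsingleton_or_nontrivial 𝒜 with h𝒜 | h𝒜
    · intro z hz
      exact absurd (isUnit_of_subsingleton _) (spectrum.mem_iff.mp hz)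
    · obtain ⟨x₀, hx₀⟩ := hsep 1 one_ne_zero
      haveI hB : Nontrivial ℬ := ⟨⟨ρ x₀ 1, 0, hx₀⟩⟩
      have hρcont : ∀ x : X, Continuous (ρ x) := fun x =>
        AddMonoidHomClass.continuous_of_bound (ρ x) 1 (by
          simpa only [one_mul] using fun a => NonUnitalStarAlgHom.norm_apply_le (ρ x) a)
      intro lam hlam
      by_contra hni
      simp only [Set.mem_iUnion, not_exists] at hni
      set b : 𝒜 := algebraMap ℂ 𝒜 lam - a with hb
      have hbn : IsStarNormal b := by
        constructor
        rw [hb, star_sub, ← algebraMap_star_comm]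
        have c1 : Commute ((algebraMap ℂ 𝒜) (star lam)) ((algebraMap ℂ 𝒜) lam - a) :=
          Algebra.commute_algebraMap_left _ _
        have c2 : Commute (star a) ((algebraMap ℂ 𝒜) lam - a) :=
          ((Algebra.commute_algebraMap_left lam (star a)).symm).sub_right ha.star_comm_self
        exact c1.sub_left c2
      have hbu : ¬ IsUnit b := spectrum.mem_iff.mp hlam
      have hbxu : ∀ x, IsUnit (ρ x b) := fun x => by
        have : ρ x b = algebraMap ℂ ℬ lam - ρ x a := by
          simp [hb, map_sub, AlgHomClass.commutes]
        rw [this]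
        exact spectrum.notMem_iff.mp (hni x)
      set p : 𝒜 := star b * b with hp
      have hpsa : IsSelfAdjoint p := IsSelfAdjoint.star_mul_self b
      have hpu : ¬ IsUnit p := by
        intro h
        apply hbu
        set v : 𝒜 := ↑h.unit⁻¹ with hv
        have hv1 : v * p = 1 := h.val_inv_mul
        have hv2 : p * v = 1 := h.mul_val_inv
        have hleft : (v * star b) * b = 1 := by rw [mul_assoc, ← hp, hv1]
        have hright : b * (star b * v) = 1 := by
          rw [← mul_assoc, ← hbn.star_comm_self, ← hp, hv2]
        have huw : v * star b = star b * v := by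
          calc v * star b = (v * star b) * (b * (star b * v)) := by rw [hright, mul_one]
            _ = ((v * star b) * b) * (star b * v) := (mul_assoc _ _ _).symm
            _ = star b * v := by rw [hleft, one_mul]
        exact ⟨⟨b, star b * v, hright, by rw [← huw, hleft]⟩, rfl⟩
      have hpxu : ∀ x, IsUnit (ρ x p) := fun x => by
        rw [hp, map_mul, map_star]
        exact ((hbxu x).star).mul (hbxu x)
      have h0p : (0 : ℝ) ∈ spectrum ℝ p := by
        rw [spectrum.mem_iff]
        simpa using hpu
      have hFc : Continuous fun x => Ring.inverse (ρ x p) := by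
        refine continuous_iff_continuousAt.mpr fun x => ?_
        have h1 : ContinuousAt Ring.inverse (ρ x p) := by
          have := NormedRing.inverse_continuousAt (hpxu x).unit
          rwa [IsUnit.unit_spec] at this
        exact ContinuousAt.comp (f := fun y => ρ y p) h1 ((hcont p).continuousAt)
      obtain ⟨M, hM⟩ : ∃ M, ∀ x, ‖Ring.inverse (ρ x p)‖ ≤ M := by
        obtain ⟨M, hM⟩ := (isCompact_range hFc.norm).bddAbove
        exact ⟨M, fun x => hM ⟨x, rfl⟩⟩
      set M' : ℝ := max M 1 with hM'
      have hM'pos : 0 < M' := lt_of_lt_of_le one_pos (le_max_right _ _)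
      set f : ℝ → ℝ := fun t => max (1 - M' * t) 0 with hf
      have hfc : Continuous f := by fun_prop
      set c : 𝒜 := cfc f p with hc
      have hc0 : c ≠ 0 := by
        have h1 : (1 : ℝ) ∈ spectrum ℝ c := by
          rw [hc, cfc_map_spectrum (f := f) (a := p) hpsa hfc.continuousOn]
          exact ⟨0, h0p, by simp [hf]⟩
        intro hc0'
        rw [hc0', spectrum.zero_eq] at h1
        simp at h1
      obtain ⟨x, hx⟩ := hsep c hc0
      apply hx
      have hmap : ρ x c = cfc f (ρ x p) :=
        StarAlgHom.map_cfc (ρ x) f p hfc.continuousOn (hρcont x) hpsa (hpsa.map (ρ x))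
      rw [hmap]
      have hvanish : (spectrum ℝ (ρ x p)).EqOn f 0 := by
        intro r hr
        have hrnn : 0 ≤ r := by
          have hq : ρ x p = star (ρ x b) * ρ x b := by rw [hp, map_mul, map_star]
          rw [hq] at hr
          exact spectrum_star_mul_self_nonneg r hr
        have hrne : r ≠ 0 := by
          intro h0
          exact (spectrum.zero_notMem_iff ℝ|>.mpr (hpxu x)) (h0 ▸ hr)
        have hrpos : 0 < r := lt_of_le_of_ne hrnn (Ne.symm hrne)
        have hrinv : r⁻¹ ∈ spectrum ℝ (Ring.inverse (ρ x p)) := by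
          have h2 := Ring.inverse_unit (hpxu x).unit
          have h3 := spectrum.inv_mem_iff (r := Units.mk0 r hrne) (a := (hpxu x).unit) |>.mp
            (by simpa using hr)
          rw [IsUnit.unit_spec] at h2
          rw [h2]
          simpa using h3
        have hbound : r⁻¹ ≤ M' := by
          calc r⁻¹ ≤ ‖r⁻¹‖ := le_abs_self _
            _ ≤ ‖Ring.inverse (ρ x p)‖ := spectrum.norm_le_norm_of_mem hrinv
            _ ≤ M := hM x
            _ ≤ M' := le_max_left _ _
        have : (1 : ℝ) ≤ M' * r := by
          calc (1 : ℝ) = r⁻¹ * r := (inv_mul_cancel₀ hrne).symm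
            _ ≤ M' * r := by gcongr
        simp only [hf, Pi.zero_apply]
        exact max_eq_right (by linarith)
      rw [cfc_congr hvanish]
      exact cfc_zero ℝ _
  exact ⟨key, key ▸ spectrum.isClosed a⟩
end

section
/- For the unitaries U, V on L²(𝕋²) with UV = e^{2πiα}VU as above, set W = e^{−iπα} U V and let L = Φ(g) for g = [[1,0],[1,1]] ∈ SL(2,ℤ). Then L U L^{-1} = W and L V L^{-1} = V. Consequently, for any κ, λ ∈ ℝ, the operators exp[−2iκ Re(V)] exp[−2iκλ Re(U)] and exp[−2iκ Re(V)] exp[−2iκλ Re(W)] are unitarily equivalent and hence have equal spectra. -/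
open Complex

/-! The shear `L : ξ_{m,n} ↦ ξ_{m,m+n}` satisfies `L U = W L` and `L V = V L` on the basis
vectors, hence on all of `L²(𝕋²)`. Conjugation by `L` is then a ⋆-algebra automorphism of the
bounded operators; it commutes with `Re` and, being continuous, with `exp`, so it carries
`exp[-2iκ Re V] exp[-2iκλ Re U]` to `exp[-2iκ Re V] exp[-2iκλ Re W]`. -/

theorem HilbertBasis.ext_continuousLinearMap {ι 𝕜 E F : Type*} [RCLike 𝕜] [NormedAddCommGroup E]
    [InnerProductSpace 𝕜 E] [TopologicalSpace F] [AddCommGroup F] [Module 𝕜 F] [T2Space F]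
    (b : HilbertBasis ι 𝕜 E) {f g : E →L[𝕜] F} (h : ∀ i, f (b i) = g (b i)) : f = g :=
  ContinuousLinearMap.ext_on (Submodule.dense_iff_topologicalClosure_eq_top.mpr b.dense_span)
    (by rintro _ ⟨i, rfl⟩; exact h i)

namespace Unitary

theorem conjStarAlgAut_eq_of_mul_eq {S R : Type*} [Semiring R] [StarMul R] [SMul S R]
    [IsScalarTower S R R] [SMulCommClass S R R] (u : unitary R) {a b : R}
    (h : u * a = b * u) : conjStarAlgAut S R u a = b := by
  rw [conjStarAlgAut_apply, h, mul_assoc, mul_star_self_of_mem u.2, mul_one]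

theorem conjStarAlgAut_exp {𝕜 𝔸 : Type*} [RCLike 𝕜] [NormedRing 𝔸] [NormedAlgebra 𝕜 𝔸]
    [CompleteSpace 𝔸] [StarMul 𝔸] (u : unitary 𝔸) (x : 𝔸) :
    conjStarAlgAut 𝕜 𝔸 u (NormedSpace.exp x) = NormedSpace.exp (conjStarAlgAut 𝕜 𝔸 u x) := by
  let : NormedAlgebra ℚ 𝔸 := .restrictScalars ℚ 𝕜 𝔸
  exact (NormedSpace.exp_units_conj (toUnits u) x).symm

end Unitary

section Shear

variable {H : Type*} [NormedAddCommGroup H] [InnerProductSpace ℂ H]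
  (ξ : HilbertBasis (ℤ × ℤ) ℂ H) {θ : ℂ} {U V L : H →L[ℂ] H}

theorem shear_mul_U_eq
    (hU : ∀ m n : ℤ, U (ξ (m, n)) = Complex.exp (θ * n) • ξ (m + 1, n))
    (hV : ∀ m n : ℤ, V (ξ (m, n)) = Complex.exp (-(θ * m)) • ξ (m, n + 1))
    (hL : ∀ m n : ℤ, L (ξ (m, n)) = ξ (m, m + n)) :
    L * U = (Complex.exp (-θ) • (U * V)) * L := by
  refine ξ.ext_continuousLinearMap fun ⟨m, n⟩ ↦ ?_
  simp only [mul_apply_eq_comp, smul_apply, hU, hV, hL, map_smul, smul_smul, ← Complex.exp_add]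
  congr 2
  · push_cast; ring
  · rw [add_right_comm]

theorem shear_mul_V_eq
    (hV : ∀ m n : ℤ, V (ξ (m, n)) = Complex.exp (-(θ * m)) • ξ (m, n + 1))
    (hL : ∀ m n : ℤ, L (ξ (m, n)) = ξ (m, m + n)) :
    L * V = V * L := by
  refine ξ.ext_continuousLinearMap fun ⟨m, n⟩ ↦ ?_
  simp only [mul_apply_eq_comp, hV, hL, map_smul, add_assoc]

end Shear

/-- For the unitaries `U`, `V` on `L²(𝕋²)` with `UV = e^{2πiα}VU`, set `W = e^{-iπα} U V`
and `L = Φ(g)` for `g = [[1,0],[1,1]] ∈ SL(2,ℤ)` (so `L ξ_{m,n} = ξ_{m,m+n}`). Then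
`L U L⁻¹ = W` and `L V L⁻¹ = V`. Consequently, for any `κ, λ ∈ ℝ` the operators
`exp[-2iκ Re(V)] exp[-2iκλ Re(U)]` and `exp[-2iκ Re(V)] exp[-2iκλ Re(W)]` are unitarily
equivalent and hence have equal spectra. -/
theorem stmt_18 {H : Type*} [NormedAddCommGroup H] [InnerProductSpace ℂ H] [CompleteSpace H]
    (ξ : HilbertBasis (ℤ × ℤ) ℂ H) (α κ l : ℝ)
    (U V L : unitary (H →L[ℂ] H))
    (hU : ∀ m n : ℤ, (U : H →L[ℂ] H) (ξ (m, n)) = Complex.exp (π * α * I * n) • ξ (m + 1, n))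
    (hV : ∀ m n : ℤ, (V : H →L[ℂ] H) (ξ (m, n)) = Complex.exp (-(π * α * I * m)) • ξ (m, n + 1))
    (hL : ∀ m n : ℤ, (L : H →L[ℂ] H) (ξ (m, n)) = ξ (m, m + n))
    (W : H →L[ℂ] H)
    (hW : W = Complex.exp (-(π * α * I)) • ((U * V : unitary (H →L[ℂ] H)) : H →L[ℂ] H))
    (A B : H →L[ℂ] H)
    (hA : A = NormedSpace.exp ((-(2 * κ) * I : ℂ) •
        ((2 : ℂ)⁻¹ • ((V : H →L[ℂ] H) + star (V : H →L[ℂ] H)))) *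
      NormedSpace.exp ((-(2 * κ * l) * I : ℂ) •
        ((2 : ℂ)⁻¹ • ((U : H →L[ℂ] H) + star (U : H →L[ℂ] H)))))
    (hB : B = NormedSpace.exp ((-(2 * κ) * I : ℂ) •
        ((2 : ℂ)⁻¹ • ((V : H →L[ℂ] H) + star (V : H →L[ℂ] H)))) *
      NormedSpace.exp ((-(2 * κ * l) * I : ℂ) • ((2 : ℂ)⁻¹ • (W + star W)))) :
    ((L * U * L⁻¹ : unitary (H →L[ℂ] H)) : H →L[ℂ] H) = W ∧
    ((L * V * L⁻¹ : unitary (H →L[ℂ] H)) : H →L[ℂ] H) = (V : H →L[ℂ] H) ∧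
    (∃ O ∈ unitary (H →L[ℂ] H), B = O * A * star O) ∧
    spectrum ℂ A = spectrum ℂ B := by
  set Φ := Unitary.conjStarAlgAut ℂ (H →L[ℂ] H) L
  have hΦU : Φ U = W := Unitary.conjStarAlgAut_eq_of_mul_eq L <| by
    rw [hW]; exact shear_mul_U_eq ξ hU hV hL
  have hΦV : Φ V = V := Unitary.conjStarAlgAut_eq_of_mul_eq L (shear_mul_V_eq ξ hV hL)
  have hBA : B = Φ A := by
    rw [hA, hB, map_mul, Unitary.conjStarAlgAut_exp, Unitary.conjStarAlgAut_exp]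
    simp only [map_smul, map_add, map_star]
    rw [hΦU, hΦV]
  refine ⟨hΦU, hΦV, ⟨L, L.2, hBA⟩, ?_⟩
  rw [hBA, AlgEquiv.spectrum_eq]
end
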